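/- arXiv:1106.4351 — 4 statements merged into one kernel-verified Lean document; each statement's English description precedes it below -/
import Mathlib

section
/- Let ε > 0 and λ ∈ ℝ with λ < 2d/ε². Let u : Ω → ℝ be such that u ∘ cp is twice differentiable on Ω and Δ(u ∘ cp)(x) = −λ u(x) for every x ∈ S (the closest-point characterization of u being a Laplace–Beltrami eigenfunction of S with eigenvalue λ). Define v : Ω → ℝ by v(x) = (Δ(u ∘ cp)(x) + (2d/ε²)·u(cp(x))) / (−λ + 2d/ε²). Then v(x) = u(x) for every x ∈ S, and v satisfies the regularized embedded eigenvalue problem −Δ♯_ε v(x) = λ v(x) for every x ∈ Ω. -/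
/-- The standard Euclidean Laplacian on `ℝ^d`: the sum of the second partial
derivatives. -/
noncomputable def lap {d : ℕ} (f : EuclideanSpace ℝ (Fin d) → ℝ)
    (x : EuclideanSpace ℝ (Fin d)) : ℝ :=
  ∑ i : Fin d, fderiv ℝ (fun y => fderiv ℝ f y (EuclideanSpace.single i 1)) x
    (EuclideanSpace.single i 1)

/-- The regularized operator `Δ♯_ε v(x) = Δ(v ∘ cp)(x) − (2d/ε²)·(v(x) − v(cp(x)))`. -/
noncomputable def lapSharp {d : ℕ}
    (cp : EuclideanSpace ℝ (Fin d) → EuclideanSpace ℝ (Fin d)) (ε : ℝ)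
    (v : EuclideanSpace ℝ (Fin d) → ℝ) (x : EuclideanSpace ℝ (Fin d)) : ℝ :=
  lap (fun y => v (cp y)) x - (2 * (d : ℝ) / ε ^ 2) * (v x - v (cp x))

/-! Since `cp` fixes `S`, the defining formula of `v` and the eigenvalue equation give
`v = u` on `S`; as `cp` maps `Ω` into `S`, this makes `v ∘ cp = u ∘ cp` near every point of `Ω`,
so `Δ(v ∘ cp) = Δ(u ∘ cp)` there, and the regularized equation at `x` becomes a linear
identity in `v x` which is the definition of `v x` with the denominator cleared. -/

open Filter Topology

theorem lap_congr_of_eventuallyEq {d : ℕ} {f g : EuclideanSpace ℝ (Fin d) → ℝ}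
    {x : EuclideanSpace ℝ (Fin d)} (h : f =ᶠ[𝓝 x] g) : lap f x = lap g x := by
  refine Finset.sum_congr rfl fun i _ => ?_
  have hderiv : (fun y => fderiv ℝ f y (EuclideanSpace.single i 1)) =ᶠ[𝓝 x]
      fun y => fderiv ℝ g y (EuclideanSpace.single i 1) :=
    (h.fderiv (𝕜 := ℝ)).fun_comp (· (EuclideanSpace.single i 1))
  rw [hderiv.fderiv_eq]

theorem eq_of_mem_of_norm_sub_eq_infDist {E : Type*} [NormedAddCommGroup E] {S : Set E}
    {x y : E} (hx : x ∈ S) (h : ‖x - y‖ = Metric.infDist x S) : y = x := by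
  rw [Metric.infDist_zero_of_mem hx, norm_sub_eq_zero_iff] at h
  exact h.symm

theorem stmt0_general (d : ℕ)
    (S Ω : Set (EuclideanSpace ℝ (Fin d))) (hΩ : IsOpen Ω)
    (hSΩ : S ⊆ Ω)
    (cp : EuclideanSpace ℝ (Fin d) → EuclideanSpace ℝ (Fin d))
    (hcpS : ∀ x ∈ Ω, cp x ∈ S)
    (hcpdist : ∀ x ∈ Ω, ‖x - cp x‖ = Metric.infDist x S)
    (ε lam : ℝ) (hlam : lam < 2 * (d : ℝ) / ε ^ 2)
    (u : EuclideanSpace ℝ (Fin d) → ℝ)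
    (heig : ∀ x ∈ S, lap (fun y => u (cp y)) x = -lam * u x)
    (v : EuclideanSpace ℝ (Fin d) → ℝ)
    (hv : ∀ x ∈ Ω, v x =
      (lap (fun y => u (cp y)) x + (2 * (d : ℝ) / ε ^ 2) * u (cp x)) /
        (-lam + 2 * (d : ℝ) / ε ^ 2)) :
    (∀ x ∈ S, v x = u x) ∧
    (∀ x ∈ Ω, -(lapSharp cp ε v x) = lam * v x) := by
  have hgap : -lam + 2 * (d : ℝ) / ε ^ 2 ≠ 0 := by linarith
  have hcp_self : ∀ x ∈ S, cp x = x := fun x hx =>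
    eq_of_mem_of_norm_sub_eq_infDist hx (hcpdist x (hSΩ hx))
  have hvu : ∀ x ∈ S, v x = u x := by
    intro x hx
    rw [hv x (hSΩ hx), heig x hx, hcp_self x hx]
    field_simp
  refine ⟨hvu, fun x hx => ?_⟩
  have hlap : lap (fun y => v (cp y)) x = lap (fun y => u (cp y)) x :=
    lap_congr_of_eventuallyEq <|
      eventually_of_mem (hΩ.mem_nhds hx) fun y hy => hvu _ (hcpS y hy)
  rw [lapSharp, hlap, hvu _ (hcpS x hx), hv x hx]
  field_simp
  ring

theorem stmt0 (d : ℕ) (hd : 1 ≤ d)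
    (S Ω : Set (EuclideanSpace ℝ (Fin d))) (hSne : S.Nonempty) (hΩ : IsOpen Ω)
    (hSΩ : S ⊆ Ω)
    (cp : EuclideanSpace ℝ (Fin d) → EuclideanSpace ℝ (Fin d))
    (hcpS : ∀ x ∈ Ω, cp x ∈ S)
    (hcpdist : ∀ x ∈ Ω, ‖x - cp x‖ = Metric.infDist x S)
    (ε lam : ℝ) (hε : 0 < ε) (hlam : lam < 2 * (d : ℝ) / ε ^ 2)
    (u : EuclideanSpace ℝ (Fin d) → ℝ)
    (hu2 : ContDiffOn ℝ 2 (fun x => u (cp x)) Ω)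
    (heig : ∀ x ∈ S, lap (fun y => u (cp y)) x = -lam * u x)
    (v : EuclideanSpace ℝ (Fin d) → ℝ)
    (hv : ∀ x ∈ Ω, v x =
      (lap (fun y => u (cp y)) x + (2 * (d : ℝ) / ε ^ 2) * u (cp x)) /
        (-lam + 2 * (d : ℝ) / ε ^ 2)) :
    (∀ x ∈ S, v x = u x) ∧
    (∀ x ∈ Ω, -(lapSharp cp ε v x) = lam * v x) :=
  stmt0_general d S Ω hΩ hSΩ cp hcpS hcpdist ε lam hlam u heig v hv
end

section
/- Let ε > 0 and λ ∈ ℝ with λ ≠ 2d/ε². Suppose v₁, v₂ : Ω → ℝ are such that v₁ ∘ cp and v₂ ∘ cp are twice differentiable on Ω, both satisfy the regularized embedded eigenvalue problem −Δ♯_ε vᵢ(x) = λ vᵢ(x) for every x ∈ Ω, and v₁(x) = v₂(x) for every x ∈ S. Then v₁(x) = v₂(x) for every x ∈ Ω. (Uniqueness of the embedded eigenfunction extending a given surface eigenfunction.) -/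
theorem stmt1 (d : ℕ) (hd : 1 ≤ d)
    (S Ω : Set (EuclideanSpace ℝ (Fin d))) (hSne : S.Nonempty) (hΩ : IsOpen Ω)
    (hSΩ : S ⊆ Ω)
    (cp : EuclideanSpace ℝ (Fin d) → EuclideanSpace ℝ (Fin d))
    (hcpS : ∀ x ∈ Ω, cp x ∈ S)
    (hcpdist : ∀ x ∈ Ω, ‖x - cp x‖ = Metric.infDist x S)
    (ε lam : ℝ) (hε : 0 < ε) (hlam : lam ≠ 2 * (d : ℝ) / ε ^ 2)
    (v₁ v₂ : EuclideanSpace ℝ (Fin d) → ℝ)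
    (hv₁2 : ContDiffOn ℝ 2 (fun x => v₁ (cp x)) Ω)
    (hv₂2 : ContDiffOn ℝ 2 (fun x => v₂ (cp x)) Ω)
    (heig₁ : ∀ x ∈ Ω, -(lapSharp cp ε v₁ x) = lam * v₁ x)
    (heig₂ : ∀ x ∈ Ω, -(lapSharp cp ε v₂ x) = lam * v₂ x)
    (hagree : ∀ x ∈ S, v₁ x = v₂ x) :
    ∀ x ∈ Ω, v₁ x = v₂ x := by
  -- the compositions agree on Ω
  have hcomp : ∀ y ∈ Ω, v₁ (cp y) = v₂ (cp y) := fun y hy => hagree _ (hcpS y hy)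
  -- first derivatives agree on Ω
  have hfd : ∀ y ∈ Ω, fderiv ℝ (fun z => v₁ (cp z)) y = fderiv ℝ (fun z => v₂ (cp z)) y := by
    intro y hy
    apply Filter.EventuallyEq.fderiv_eq
    filter_upwards [hΩ.mem_nhds hy] with z hz using hcomp z hz
  intro x hx
  -- Laplacians agree at x
  have hlap : lap (fun y => v₁ (cp y)) x = lap (fun y => v₂ (cp y)) x := by
    unfold lap
    refine Finset.sum_congr rfl fun i _ => ?_
    have h2 : fderiv ℝ (fun y => fderiv ℝ (fun z => v₁ (cp z)) y (EuclideanSpace.single i 1)) x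
        = fderiv ℝ (fun y => fderiv ℝ (fun z => v₂ (cp z)) y (EuclideanSpace.single i 1)) x := by
      apply Filter.EventuallyEq.fderiv_eq
      filter_upwards [hΩ.mem_nhds hx] with z hz
      rw [hfd z hz]
    rw [h2]
  have h1 := heig₁ x hx
  have h2 := heig₂ x hx
  unfold lapSharp at h1 h2
  have ha : v₁ (cp x) = v₂ (cp x) := hcomp x hx
  have hc : lam - 2 * (d : ℝ) / ε ^ 2 ≠ 0 := sub_ne_zero.mpr hlam
  have key : (lam - 2 * (d : ℝ) / ε ^ 2) * (v₁ x - v₂ x) = 0 := by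
    rw [hlap] at h1
    rw [ha] at h1
    nlinarith [h1, h2]
  have := mul_eq_zero.mp key
  rcases this with h | h
  · exact absurd h hc
  · linarith
end

section
/- Let ε > 0. Every function v : Ω → ℝ with v(x) = 0 for all x ∈ S satisfies −Δ♯_ε v(x) = (2d/ε²)·v(x) for every x ∈ Ω (since v ∘ cp ≡ 0, so Δ(v ∘ cp) ≡ 0 and the penalty term equals −(2d/ε²) v). Consequently, if Ω \ S is infinite, the eigenspace of the regularized embedded eigenvalue problem at the eigenvalue 2d/ε² is infinite-dimensional: the null-space ill-posedness is shifted from λ = 0 to λ = 2d/ε². -/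
/-!
A function vanishing on `S` vanishes on `Ω` after composing with `cp`, so its `Δ(v ∘ cp)` is
zero and only the penalty term `-(2d/ε²) v` survives: it is an eigenfunction of `-Δ♯_ε` with
eigenvalue `2d/ε²`. The eigenfunctions form a subspace because on C² functions the Laplacian is
linear (we identify `lap` with Mathlib's `Δ`), and the indicators of the infinitely many points of
`Ω \ S` are linearly independent members of it.
-/

open Filter Topology InnerProductSpace Laplacian

section

variable {d : ℕ}

lemma lap_eq_laplacian {f : EuclideanSpace ℝ (Fin d) → ℝ} {x : EuclideanSpace ℝ (Fin d)}
    (hf : ContDiffAt ℝ 2 f x) : lap f x = Δ f x := by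
  rw [laplacian_eq_iteratedFDeriv_orthonormalBasis f (EuclideanSpace.basisFun (Fin d) ℝ)]
  refine Finset.sum_congr rfl fun i _ => ?_
  have hf' : DifferentiableAt ℝ (fderiv ℝ f) x :=
    (hf.fderiv_right (m := 1) le_rfl).differentiableAt one_ne_zero
  rw [iteratedFDeriv_two_apply, fderiv_clm_apply hf' (differentiableAt_const _)]
  simp [EuclideanSpace.basisFun_apply]

lemma lap_eq_zero_of_eventuallyEq_zero {f : EuclideanSpace ℝ (Fin d) → ℝ}
    {x : EuclideanSpace ℝ (Fin d)} (h : f =ᶠ[𝓝 x] 0) : lap f x = 0 := by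
  rw [lap_eq_laplacian (contDiffAt_const.congr_of_eventuallyEq h),
    (laplacian_congr_nhds h).eq_of_nhds]
  exact congrFun laplacian_const x

variable {cp : EuclideanSpace ℝ (Fin d) → EuclideanSpace ℝ (Fin d)} {ε : ℝ}
  {v w : EuclideanSpace ℝ (Fin d) → ℝ} {x : EuclideanSpace ℝ (Fin d)}

lemma lapSharp_add (hv : ContDiffAt ℝ 2 (fun y => v (cp y)) x)
    (hw : ContDiffAt ℝ 2 (fun y => w (cp y)) x) :
    lapSharp cp ε (v + w) x = lapSharp cp ε v x + lapSharp cp ε w x := by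
  have hvw : ContDiffAt ℝ 2 (fun y => (v + w) (cp y)) x := hv.add hw
  simp only [lapSharp, lap_eq_laplacian hv, lap_eq_laplacian hw, lap_eq_laplacian hvw]
  rw [show (fun y => (v + w) (cp y)) = (fun y => v (cp y)) + fun y => w (cp y) from rfl,
    hv.laplacian_add hw]
  simp only [Pi.add_apply]
  ring

lemma lapSharp_smul (a : ℝ) (hv : ContDiffAt ℝ 2 (fun y => v (cp y)) x) :
    lapSharp cp ε (a • v) x = a * lapSharp cp ε v x := by
  have hav : ContDiffAt ℝ 2 (fun y => (a • v) (cp y)) x := hv.const_smul a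
  simp only [lapSharp, lap_eq_laplacian hv, lap_eq_laplacian hav]
  rw [show (fun y => (a • v) (cp y)) = a • fun y => v (cp y) from rfl, laplacian_smul a hv]
  simp only [Pi.smul_apply, smul_eq_mul]
  ring

end

section

variable {d : ℕ} {S Ω : Set (EuclideanSpace ℝ (Fin d))}

lemma neg_lapSharp_eq_of_forall_mem_eq_zero (hΩ : IsOpen Ω)
    {cp : EuclideanSpace ℝ (Fin d) → EuclideanSpace ℝ (Fin d)} (hcp : ∀ y ∈ Ω, cp y ∈ S) (ε : ℝ)
    {v : EuclideanSpace ℝ (Fin d) → ℝ} (hv : ∀ y ∈ S, v y = 0)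
    {x : EuclideanSpace ℝ (Fin d)} (hx : x ∈ Ω) :
    -(lapSharp cp ε v x) = (2 * (d : ℝ) / ε ^ 2) * v x := by
  have hzero : (fun y => v (cp y)) =ᶠ[𝓝 x] 0 :=
    eventually_of_mem (hΩ.mem_nhds hx) fun y hy => hv _ (hcp y hy)
  rw [lapSharp, lap_eq_zero_of_eventuallyEq_zero hzero, hv _ (hcp x hx)]
  ring

def lapSharpEigenspace (hΩ : IsOpen Ω) (cp : EuclideanSpace ℝ (Fin d) → EuclideanSpace ℝ (Fin d))
    (ε μ : ℝ) : Submodule ℝ (EuclideanSpace ℝ (Fin d) → ℝ) where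
  carrier := {v | ContDiffOn ℝ 2 (fun x => v (cp x)) Ω ∧
    ∀ x ∈ Ω, -(lapSharp cp ε v x) = μ * v x}
  zero_mem' := ⟨contDiffOn_const, fun x _ => by
    simp [lapSharp, lap_eq_zero_of_eventuallyEq_zero (f := fun _ => (0 : ℝ)) (x := x) .rfl]⟩
  add_mem' := by
    rintro v w ⟨hv, hv_eig⟩ ⟨hw, hw_eig⟩
    refine ⟨hv.add hw, fun x hx => ?_⟩
    rw [lapSharp_add (hv.contDiffAt (hΩ.mem_nhds hx)) (hw.contDiffAt (hΩ.mem_nhds hx)),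
      Pi.add_apply]
    linear_combination hv_eig x hx + hw_eig x hx
  smul_mem' := by
    rintro a v ⟨hv, hv_eig⟩
    refine ⟨hv.const_smul a, fun x hx => ?_⟩
    rw [lapSharp_smul a (hv.contDiffAt (hΩ.mem_nhds hx)), Pi.smul_apply, smul_eq_mul]
    linear_combination a * hv_eig x hx

end

lemma Submodule.not_finite_of_single_mem {ι R : Type*} [Semiring R] [StrongRankCondition R]
    [DecidableEq ι] {N : Submodule R (ι → R)} {T : Set ι} (hT : T.Infinite)
    (hN : ∀ p ∈ T, Pi.single p 1 ∈ N) : ¬ Module.Finite R N := by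
  have : Infinite T := hT.to_subtype
  intro _
  refine Module.Finite.not_linearIndependent_of_infinite
    (fun p : T => (⟨Pi.single (p : ι) 1, hN p p.2⟩ : N)) (LinearIndependent.of_comp N.subtype ?_)
  exact (Pi.linearIndependent_single_one ι R).comp _ Subtype.val_injective

theorem stmt8_general (d : ℕ)
    (S Ω : Set (EuclideanSpace ℝ (Fin d))) (hΩ : IsOpen Ω)
    (cp : EuclideanSpace ℝ (Fin d) → EuclideanSpace ℝ (Fin d))
    (hcpS : ∀ x ∈ Ω, cp x ∈ S)
    (ε : ℝ) :
    (∀ v : EuclideanSpace ℝ (Fin d) → ℝ, (∀ x ∈ S, v x = 0) →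
      ∀ x ∈ Ω, -(lapSharp cp ε v x) = (2 * (d : ℝ) / ε ^ 2) * v x) ∧
    ((Ω \ S).Infinite →
      ∃ N : Submodule ℝ (EuclideanSpace ℝ (Fin d) → ℝ),
        (∀ v, v ∈ N ↔ (ContDiffOn ℝ 2 (fun x => v (cp x)) Ω ∧
          ∀ x ∈ Ω, -(lapSharp cp ε v x) = (2 * (d : ℝ) / ε ^ 2) * v x)) ∧
        ¬ FiniteDimensional ℝ N) := by
  have eigen_of_vanishing : ∀ v : EuclideanSpace ℝ (Fin d) → ℝ, (∀ x ∈ S, v x = 0) →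
      ∀ x ∈ Ω, -(lapSharp cp ε v x) = (2 * (d : ℝ) / ε ^ 2) * v x :=
    fun _ hv _ hx => neg_lapSharp_eq_of_forall_mem_eq_zero hΩ hcpS ε hv hx
  refine ⟨eigen_of_vanishing, fun hinf => ⟨lapSharpEigenspace hΩ cp ε _, fun _ => Iff.rfl, ?_⟩⟩
  classical
  refine Submodule.not_finite_of_single_mem hinf fun p hp => ?_
  have hvanish : ∀ y ∈ S, (Pi.single p 1 : _ → ℝ) y = 0 := fun y hy =>
    Pi.single_eq_of_ne (ne_of_mem_of_not_mem hy hp.2) _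
  exact ⟨contDiffOn_const.congr fun y hy => hvanish _ (hcpS y hy),
    fun x hx => eigen_of_vanishing _ hvanish x hx⟩

theorem stmt8 (d : ℕ) (hd : 1 ≤ d)
    (S Ω : Set (EuclideanSpace ℝ (Fin d))) (hSne : S.Nonempty) (hΩ : IsOpen Ω)
    (hSΩ : S ⊆ Ω)
    (cp : EuclideanSpace ℝ (Fin d) → EuclideanSpace ℝ (Fin d))
    (hcpS : ∀ x ∈ Ω, cp x ∈ S)
    (hcpdist : ∀ x ∈ Ω, ‖x - cp x‖ = Metric.infDist x S)
    (ε : ℝ) (hε : 0 < ε) :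
    (∀ v : EuclideanSpace ℝ (Fin d) → ℝ, (∀ x ∈ S, v x = 0) →
      ∀ x ∈ Ω, -(lapSharp cp ε v x) = (2 * (d : ℝ) / ε ^ 2) * v x) ∧
    ((Ω \ S).Infinite →
      ∃ N : Submodule ℝ (EuclideanSpace ℝ (Fin d) → ℝ),
        (∀ v, v ∈ N ↔ (ContDiffOn ℝ 2 (fun x => v (cp x)) Ω ∧
          ∀ x ∈ Ω, -(lapSharp cp ε v x) = (2 * (d : ℝ) / ε ^ 2) * v x)) ∧
        ¬ FiniteDimensional ℝ N) :=
  stmt8_general d S Ω hΩ cp hcpS ε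
end

section
/- Let R > 0, let S ⊆ ℝ² be the circle of radius R centered at the origin, let Ω = ℝ² \ {0}, and let cp : Ω → ℝ² be cp(x) = (R/‖x‖)·x, the closest point function for S. Let n be a natural number, set λ = n²/R², and define w : Ω → ℝ by w(x₁, x₂) = Re((x₁ + i x₂)^n)/‖(x₁, x₂)‖^n (i.e. w = cos(nθ) = cos(√λ·R·θ) in polar coordinates); note w ∘ cp = w on Ω. Let ε > 0 with λε² ≠ 4 and define v : Ω → ℝ by v(x) = ( λ ε² (1 − R²/‖x‖²) / (−λ ε² + 4) + 1 ) · w(x). Then v(x) = w(x) for every x ∈ S, and v satisfies the regularized embedded eigenvalue problem −Δ♯_ε v(x) = λ v(x) for every x ∈ Ω, where Δ♯_ε v(x) := Δ(v ∘ cp)(x) − (4/ε²)·(v(x) − v(cp(x))). -/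
/-- The function `w(x₁, x₂) = Re((x₁ + i x₂)^n) / ‖(x₁,x₂)‖^n`, i.e. `cos(nθ)` in
polar coordinates. -/
noncomputable def wfun (n : ℕ) (x : EuclideanSpace ℝ (Fin 2)) : ℝ :=
  ((((x 0 : ℂ) + (x 1 : ℂ) * Complex.I)) ^ n).re / ‖x‖ ^ n

/-- The closest point function of the circle of radius `R` centred at the origin,
defined on `Ω = ℝ² \ {0}`. -/
noncomputable def cpCircle (R : ℝ) (x : EuclideanSpace ℝ (Fin 2)) :
    EuclideanSpace ℝ (Fin 2) :=
  (R / ‖x‖) • x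

/-!
Since `w` is homogeneous of degree `0`, `w ∘ cp = w`, and on the circle the coefficient of `w` in
`v` equals `1`; hence `v ∘ cp = w` on `Ω` and `Δ(v ∘ cp) = Δw`. Writing `w = Re(z ^ n) · ‖x‖ ^ (-n)`,
the product rule `Δ(fg) = f Δg + 2 ∇f · ∇g + g Δf`, the harmonicity of `Re(z ^ n)`, the formula
`Δ‖x‖ ^ p = p (p + d - 2) ‖x‖ ^ (p - 2)` and Euler's identity `x · ∇Re(z ^ n) = n Re(z ^ n)` give
`Δw = -(n² / ‖x‖²) w`. The eigenvalue equation is then an algebraic identity.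
-/

open Filter Topology

noncomputable def partialDeriv {d : ℕ} (i : Fin d) (f : EuclideanSpace ℝ (Fin d) → ℝ)
    (x : EuclideanSpace ℝ (Fin d)) : ℝ :=
  fderiv ℝ f x (EuclideanSpace.single i 1)

section PartialDeriv

variable {d : ℕ} {f g : EuclideanSpace ℝ (Fin d) → ℝ} {x : EuclideanSpace ℝ (Fin d)}

theorem lap_eq_sum_partialDeriv : lap f x = ∑ i, partialDeriv i (partialDeriv i f) x := rfl

theorem Filter.EventuallyEq.partialDeriv (h : f =ᶠ[𝓝 x] g) (i : Fin d) :
    partialDeriv i f =ᶠ[𝓝 x] partialDeriv i g :=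
  (h.fderiv (𝕜 := ℝ)).mono fun y hy => by simp only [_root_.partialDeriv, hy]

theorem Filter.EventuallyEq.lap_eq (h : f =ᶠ[𝓝 x] g) : lap f x = lap g x := by
  simp only [lap_eq_sum_partialDeriv, ((h.partialDeriv _).partialDeriv _).eq_of_nhds]

theorem sum_partialDeriv_mul_apply (f : EuclideanSpace ℝ (Fin d) → ℝ) (x y : EuclideanSpace ℝ (Fin d)) :
    ∑ i, partialDeriv i f x * y i = fderiv ℝ f x y := by
  conv_rhs => rw [← (EuclideanSpace.basisFun (Fin d) ℝ).sum_repr y]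
  simp [partialDeriv, mul_comm]

theorem partialDeriv_add (i : Fin d) (hf : DifferentiableAt ℝ f x)
    (hg : DifferentiableAt ℝ g x) :
    partialDeriv i (fun y => f y + g y) x = partialDeriv i f x + partialDeriv i g x := by
  simp [partialDeriv, fderiv_fun_add hf hg]

theorem partialDeriv_mul (i : Fin d) (hf : DifferentiableAt ℝ f x)
    (hg : DifferentiableAt ℝ g x) :
    partialDeriv i (fun y => f y * g y) x =
      f x * partialDeriv i g x + g x * partialDeriv i f x := by
  simp [partialDeriv, fderiv_fun_mul hf hg]

theorem ContDiffAt.differentiableAt_partialDeriv (hf : ContDiffAt ℝ 2 f x) (i : Fin d) :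
    DifferentiableAt ℝ (partialDeriv i f) x :=
  ((hf.fderiv_right (m := 1) le_rfl).differentiableAt one_ne_zero).clm_apply
    (differentiableAt_const _)

theorem lap_mul (hf : ContDiffAt ℝ 2 f x) (hg : ContDiffAt ℝ 2 g x) :
    lap (fun y => f y * g y) x =
      f x * lap g x + 2 * ∑ i, partialDeriv i f x * partialDeriv i g x + g x * lap f x := by
  have hfg : ∀ᶠ y in 𝓝 x, ContDiffAt ℝ 2 f y ∧ ContDiffAt ℝ 2 g y :=
    (hf.eventually (by simp)).and (hg.eventually (by simp))
  have hfirst (i : Fin d) : partialDeriv i (fun y => f y * g y) =ᶠ[𝓝 x]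
      fun y => f y * partialDeriv i g y + g y * partialDeriv i f y :=
    hfg.mono fun y hy => partialDeriv_mul i (hy.1.differentiableAt two_ne_zero)
      (hy.2.differentiableAt two_ne_zero)
  have hsecond (i : Fin d) : partialDeriv i (partialDeriv i fun y => f y * g y) x =
      f x * partialDeriv i (partialDeriv i g) x + 2 * (partialDeriv i f x * partialDeriv i g x) +
        g x * partialDeriv i (partialDeriv i f) x := by
    have hf1 := hf.differentiableAt two_ne_zero
    have hg1 := hg.differentiableAt two_ne_zero
    have hf2 := hf.differentiableAt_partialDeriv i
    have hg2 := hg.differentiableAt_partialDeriv i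
    rw [((hfirst i).partialDeriv i).eq_of_nhds,
      partialDeriv_add i (hf1.fun_mul hg2) (hg1.fun_mul hf2),
      partialDeriv_mul i hf1 hg2, partialDeriv_mul i hg1 hf2]
    ring
  simp only [lap_eq_sum_partialDeriv, hsecond, Finset.sum_add_distrib, Finset.mul_sum]

end PartialDeriv

theorem hasFDerivAt_norm_rpow_of_ne_zero {E : Type*} [NormedAddCommGroup E]
    [InnerProductSpace ℝ E] {x : E} (hx : x ≠ 0) (p : ℝ) :
    HasFDerivAt (fun y : E => ‖y‖ ^ p) ((p * ‖x‖ ^ (p - 2)) • innerSL ℝ x) x := by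
  have h := ((hasStrictFDerivAt_norm_sq x).rpow_const (p := p / 2) (by simp [hx])).hasFDerivAt
  convert h using 1
  · ext y
    rw [← Real.rpow_natCast_mul (norm_nonneg y)]
    ring_nf
  · ext v
    rw [← Real.rpow_natCast_mul (norm_nonneg x)]
    simp only [smul_apply, innerSL_apply_apply, smul_eq_mul, Nat.cast_ofNat,
      nsmul_eq_mul]
    ring_nf

section NormRpow

variable {d : ℕ} {x : EuclideanSpace ℝ (Fin d)}

theorem partialDeriv_norm_rpow (hx : x ≠ 0) (p : ℝ) (i : Fin d) :
    partialDeriv i (fun y => ‖y‖ ^ p) x = p * ‖x‖ ^ (p - 2) * x i := by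
  simp [partialDeriv, (hasFDerivAt_norm_rpow_of_ne_zero hx p).fderiv,
    EuclideanSpace.inner_single_right]

theorem sum_partialDeriv_mul_partialDeriv_norm_rpow (f : EuclideanSpace ℝ (Fin d) → ℝ)
    (hx : x ≠ 0) (p : ℝ) :
    ∑ i, partialDeriv i f x * partialDeriv i (fun y => ‖y‖ ^ p) x =
      p * ‖x‖ ^ (p - 2) * fderiv ℝ f x x := by
  rw [← sum_partialDeriv_mul_apply, Finset.mul_sum]
  refine Finset.sum_congr rfl fun i _ => ?_
  rw [partialDeriv_norm_rpow hx]
  ring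

theorem lap_norm_rpow (hx : x ≠ 0) (p : ℝ) :
    lap (fun y => ‖y‖ ^ p) x = p * (p + d - 2) * ‖x‖ ^ (p - 2) := by
  have hfirst (i : Fin d) : partialDeriv i (fun y => ‖y‖ ^ p) =ᶠ[𝓝 x]
      fun y => p * ‖y‖ ^ (p - 2) * y i :=
    (eventually_ne_nhds hx).mono fun y hy => partialDeriv_norm_rpow hy p i
  have hsecond (i : Fin d) : partialDeriv i (partialDeriv i fun y => ‖y‖ ^ p) x =
      p * (p - 2) * ‖x‖ ^ (p - 2 - 2) * x i ^ 2 + p * ‖x‖ ^ (p - 2) := by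
    have hcoord : HasFDerivAt (fun y : EuclideanSpace ℝ (Fin d) => y i)
        (EuclideanSpace.proj (𝕜 := ℝ) i) x :=
      (EuclideanSpace.proj (𝕜 := ℝ) i).hasFDerivAt (x := x)
    rw [((hfirst i).partialDeriv i).eq_of_nhds, partialDeriv,
      (((hasFDerivAt_norm_rpow_of_ne_zero hx (p - 2)).const_mul p).fun_mul hcoord).fderiv]
    simp only [add_apply, smul_apply, PiLp.proj_apply,
      PiLp.single_eq_same, smul_eq_mul, mul_one, innerSL_apply_apply,
      EuclideanSpace.inner_single_right, Real.ringHom_apply, one_mul]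
    ring
  have hnorm : ‖x‖ ^ (p - 2 - 2) * ‖x‖ ^ 2 = ‖x‖ ^ (p - 2) := by
    rw [← Real.rpow_add_natCast (norm_ne_zero_iff.mpr hx)]
    norm_num
  simp only [lap_eq_sum_partialDeriv, hsecond, Finset.sum_add_distrib, ← Finset.mul_sum,
    ← EuclideanSpace.real_norm_sq_eq, Finset.sum_const, Finset.card_univ, Fintype.card_fin,
    nsmul_eq_mul]
  rw [mul_assoc _ (‖x‖ ^ (p - 2 - 2)), hnorm]
  ring

end NormRpow

section Harmonic

open Complex

noncomputable def toComplex : EuclideanSpace ℝ (Fin 2) ≃ₗᵢ[ℝ] ℂ :=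
  orthonormalBasisOneI.repr.symm

theorem toComplex_apply (x : EuclideanSpace ℝ (Fin 2)) : toComplex x = x 0 + x 1 * I :=
  orthonormalBasisOneI_repr_symm_apply x

@[simp]
theorem toComplex_single_zero : toComplex (EuclideanSpace.single 0 1) = 1 := by
  simp [toComplex]

@[simp]
theorem toComplex_single_one : toComplex (EuclideanSpace.single 1 1) = I := by
  simp [toComplex]

variable {F : ℂ → ℂ}

theorem fderiv_re_comp_toComplex_apply (hF : Differentiable ℂ F) (x v : EuclideanSpace ℝ (Fin 2)) :
    fderiv ℝ (fun y => (F (toComplex y)).re) x v = (toComplex v * deriv F (toComplex x)).re := by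
  have h : HasFDerivAt (fun y => (F (toComplex y)).re) _ x := reCLM.hasFDerivAt.comp x
    (((hF _).hasDerivAt.hasFDerivAt.restrictScalars ℝ).comp x toComplex.hasFDerivAt)
  rw [h.fderiv]
  simp [mul_comm]

theorem lap_re_comp_toComplex_eq_zero (hF : Differentiable ℂ F) (x : EuclideanSpace ℝ (Fin 2)) :
    lap (fun y => (F (toComplex y)).re) x = 0 := by
  have hsecond (i : Fin 2) : partialDeriv i (partialDeriv i fun y => (F (toComplex y)).re) x =
      (toComplex (EuclideanSpace.single i 1) ^ 2 * deriv (deriv F) (toComplex x)).re := by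
    have hfirst : partialDeriv i (fun y => (F (toComplex y)).re) =
        fun y => ((fun z => toComplex (EuclideanSpace.single i 1) * deriv F z) (toComplex y)).re :=
      funext fun y => fderiv_re_comp_toComplex_apply hF y _
    rw [hfirst, partialDeriv, fderiv_re_comp_toComplex_apply (hF.deriv.const_mul _),
      deriv_const_mul _ (hF.deriv _)]
    ring_nf
  -- the two second partials carry the factors `1 ^ 2` and `I ^ 2 = -1`
  simp [lap_eq_sum_partialDeriv, Fin.sum_univ_two, hsecond]

end Harmonic

theorem wfun_eq_re_mul_norm_rpow (n : ℕ) :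
    wfun n = fun y => (toComplex y ^ n).re * ‖y‖ ^ (-(n : ℝ)) := by
  funext y
  rw [wfun, toComplex_apply, Real.rpow_neg (norm_nonneg y), Real.rpow_natCast, div_eq_mul_inv]

theorem wfun_smul_of_pos (n : ℕ) {c : ℝ} (hc : 0 < c) (x : EuclideanSpace ℝ (Fin 2)) :
    wfun n (c • x) = wfun n x := by
  have hz : toComplex (c • x) = c * toComplex x := by
    rw [map_smul, Complex.real_smul]
  simp only [wfun_eq_re_mul_norm_rpow, hz, mul_pow, ← Complex.ofReal_pow, Complex.re_ofReal_mul,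
    norm_smul, Real.norm_of_nonneg hc.le, Real.mul_rpow hc.le (norm_nonneg x),
    Real.rpow_neg hc.le, Real.rpow_natCast]
  field_simp

theorem lap_wfun (n : ℕ) {x : EuclideanSpace ℝ (Fin 2)} (hx : x ≠ 0) :
    lap (wfun n) x = -((n : ℝ) ^ 2 / ‖x‖ ^ 2) * wfun n x := by
  have hre : ContDiffAt ℝ 2 (fun y => (toComplex y ^ n).re) x :=
    (Complex.reCLM.contDiff.comp ((contDiff_id.pow n).comp toComplex.contDiff)).contDiffAt
  have hnorm : ContDiffAt ℝ 2 (fun y => ‖y‖ ^ (-(n : ℝ))) x :=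
    (contDiffAt_norm ℝ hx).rpow_const_of_ne (norm_ne_zero_iff.mpr hx)
  have heuler : toComplex x * deriv (fun z => z ^ n) (toComplex x) = n * toComplex x ^ n := by
    rcases eq_or_ne n 0 with rfl | hn
    · simp
    · rw [deriv_pow_field, mul_left_comm, mul_pow_sub_one hn]
  have hpow : ‖x‖ ^ (-(n : ℝ) - 2) = ‖x‖ ^ (-(n : ℝ)) / ‖x‖ ^ 2 := by
    rw [Real.rpow_sub (norm_pos_iff.mpr hx), Real.rpow_two]
  rw [wfun_eq_re_mul_norm_rpow, lap_mul hre hnorm, sum_partialDeriv_mul_partialDeriv_norm_rpow _ hx,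
    lap_re_comp_toComplex_eq_zero (differentiable_pow n), lap_norm_rpow hx,
    fderiv_re_comp_toComplex_apply (differentiable_pow n), heuler, hpow,
    ← Complex.ofReal_natCast, Complex.re_ofReal_mul]
  push_cast
  ring

theorem norm_cpCircle {R : ℝ} (hR : 0 < R) {x : EuclideanSpace ℝ (Fin 2)} (hx : x ≠ 0) :
    ‖cpCircle R x‖ = R := by
  rw [cpCircle, norm_smul, Real.norm_of_nonneg (div_pos hR (norm_pos_iff.mpr hx)).le,
    div_mul_cancel₀ _ (norm_ne_zero_iff.mpr hx)]

theorem wfun_cpCircle {R : ℝ} (hR : 0 < R) (n : ℕ) {x : EuclideanSpace ℝ (Fin 2)} (hx : x ≠ 0) :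
    wfun n (cpCircle R x) = wfun n x :=
  wfun_smul_of_pos n (div_pos hR (norm_pos_iff.mpr hx)) x

theorem stmt12 (R : ℝ) (hR : 0 < R) (n : ℕ) (lam : ℝ) (hlamdef : lam = (n : ℝ) ^ 2 / R ^ 2)
    (ε : ℝ) (hε : 0 < ε) (hres : lam * ε ^ 2 ≠ 4)
    (v : EuclideanSpace ℝ (Fin 2) → ℝ)
    (hv : ∀ x : EuclideanSpace ℝ (Fin 2), x ≠ 0 →
      v x = (lam * ε ^ 2 * (1 - R ^ 2 / ‖x‖ ^ 2) / (-(lam * ε ^ 2) + 4) + 1) * wfun n x) :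
    (∀ x : EuclideanSpace ℝ (Fin 2), x ≠ 0 → wfun n (cpCircle R x) = wfun n x) ∧
    (∀ x : EuclideanSpace ℝ (Fin 2), ‖x‖ = R → v x = wfun n x) ∧
    (∀ x : EuclideanSpace ℝ (Fin 2), x ≠ 0 →
      -(lap (fun y => v (cpCircle R y)) x - (4 / ε ^ 2) * (v x - v (cpCircle R x)))
        = lam * v x) := by
  have hv_circle (x : EuclideanSpace ℝ (Fin 2)) (hxR : ‖x‖ = R) : v x = wfun n x := by
    have hx : x ≠ 0 := norm_pos_iff.mp (hxR ▸ hR)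
    rw [hv x hx, hxR, div_self (pow_ne_zero 2 hR.ne'), sub_self]
    simp
  have hv_cp (x : EuclideanSpace ℝ (Fin 2)) (hx : x ≠ 0) : v (cpCircle R x) = wfun n x := by
    rw [hv_circle _ (norm_cpCircle hR hx), wfun_cpCircle hR n hx]
  refine ⟨fun x hx => wfun_cpCircle hR n hx, hv_circle, fun x hx => ?_⟩
  have hlap : lap (fun y => v (cpCircle R y)) x = lap (wfun n) x :=
    Filter.EventuallyEq.lap_eq ((eventually_ne_nhds hx).mono hv_cp)
  have hn : (n : ℝ) ^ 2 = lam * R ^ 2 := by rw [hlamdef]; field_simp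
  have hden : -(lam * ε ^ 2) + 4 ≠ 0 := fun h => hres (by linarith)
  rw [hlap, lap_wfun n hx, hv_cp x hx, hv x hx, hn]
  field_simp
  ring
end
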